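/- Let Γ ≤ Aut(X*) be a weakly branch group generated by finitely many finite-state automorphisms. Then every finite-index subgroup N of Γ contains rist_Γ(n)' for some n. -/

import Mathlib

open List

/-- Vertices of the regular rooted tree over alphabet `X`: finite words. -/
abbrev Vtx (X : Type*) := List X

section Tree

variable {X : Type*} [DecidableEq X]

/-- A permutation of the vertex set is a rooted-tree automorphism if it fixes the
root and maps children of a vertex to children of its image. -/
def IsTreeAut (f : Equiv.Perm (Vtx X)) : Prop :=
  f [] = [] ∧ ∀ (w : Vtx X) (x : X), ∃ y : X, f (w ++ [x]) = f w ++ [y]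

/-- The state (section) of `f` at the vertex `w`, as a function on vertices. -/
def stateFun (f : Equiv.Perm (Vtx X)) (w : Vtx X) : Vtx X → Vtx X :=
  fun t => (f (w ++ t)).drop w.length

/-- The rigid stabilizer of the vertex `v` in the full automorphism group:
all permutations moving only (proper or improper) descendants of `v`. -/
def rist (v : Vtx X) : Subgroup (Equiv.Perm (Vtx X)) where
  carrier := {g | ∀ w : Vtx X, ¬ v <+: w → g w = w}
  one_mem' := by intro w _; rfl
  mul_mem' := by
    intro a b ha hb w hw
    have : (a * b) w = a (b w) := rfl
    rw [this, hb w hw, ha w hw]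
  inv_mem' := by
    intro a ha w hw
    have h := ha w hw
    conv_lhs => rw [← h]
    exact Equiv.symm_apply_apply a w

/-- The rigid stabilizer of `v` in `G`. -/
def ristG (G : Subgroup (Equiv.Perm (Vtx X))) (v : Vtx X) :
    Subgroup (Equiv.Perm (Vtx X)) :=
  rist v ⊓ G

/-- The `n`-th level rigid stabilizer of `G`: the subgroup generated by the
rigid stabilizers of all vertices of level `n`. -/
def ristLevel (G : Subgroup (Equiv.Perm (Vtx X))) (n : ℕ) :
    Subgroup (Equiv.Perm (Vtx X)) :=
  ⨆ v ∈ {v : Vtx X | v.length = n}, ristG G v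

/-- The `n`-th level stabilizer of `G`: elements fixing all vertices of level `≤ n`. -/
def stabLevel (G : Subgroup (Equiv.Perm (Vtx X))) (n : ℕ) :
    Subgroup (Equiv.Perm (Vtx X)) :=
  G ⊓ { carrier := {g | ∀ w : Vtx X, w.length ≤ n → g w = w}
        one_mem' := by intro w _; rfl
        mul_mem' := by
          intro a b ha hb w hw
          have : (a * b) w = a (b w) := rfl
          rw [this, hb w hw, ha w hw]
        inv_mem' := by
          intro a ha w hw
          have h := ha w hw
          conv_lhs => rw [← h]
          exact Equiv.symm_apply_apply a w }

/-- Underlying function of the vtr `v*g`. -/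
def vtrFun (v : Vtx X) (g : Vtx X → Vtx X) : Vtx X → Vtx X :=
  fun w => if v <+: w then v ++ g (w.drop v.length) else w

lemma vtr_aux (v : Vtx X) (g h : Vtx X → Vtx X)
    (hgh : ∀ t, h (g t) = t) (w : Vtx X) :
    vtrFun v h (vtrFun v g w) = w := by
  by_cases hp : v <+: w
  · obtain ⟨t, rfl⟩ := hp
    simp [vtrFun, List.drop_left, hgh, List.prefix_append]
  · simp [vtrFun, hp]

/-- The vtr `v*g`: the automorphism acting as `g` on the subtree rooted
at `v` and trivially elsewhere. -/
def vtr (v : Vtx X) (g : Equiv.Perm (Vtx X)) : Equiv.Perm (Vtx X) where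
  toFun := vtrFun v g
  invFun := vtrFun v g.symm
  left_inv := vtr_aux v g g.symm fun t => g.symm_apply_apply t
  right_inv := vtr_aux v g.symm g fun t => g.apply_symm_apply t

lemma vtr_apply (v : Vtx X) (g : Equiv.Perm (Vtx X)) (w : Vtx X) :
    vtr v g w = if v <+: w then v ++ g (w.drop v.length) else w := rfl

/-- `g ↦ v*g` as a group homomorphism. -/
def vtrHom (v : Vtx X) : Equiv.Perm (Vtx X) →* Equiv.Perm (Vtx X) where
  toFun := vtr v
  map_one' := by
    ext w
    by_cases hp : v <+: w
    · obtain ⟨t, rfl⟩ := hp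
      simp [vtr, vtrFun, List.drop_left, List.prefix_append]
    · simp [vtr, vtrFun, hp]
  map_mul' := by
    intro a b
    ext w
    have hmul : (vtr v a * vtr v b) w = vtr v a (vtr v b w) := rfl
    rw [hmul]
    by_cases hp : v <+: w
    · obtain ⟨t, rfl⟩ := hp
      simp [vtr, vtrFun, List.drop_left, List.prefix_append]
    · simp [vtr, vtrFun, hp]

/-- `K` is a branching subgroup of `G`: `K ≤ G` and `v*K ≤ K` for all vertices. -/
def IsBranching (G K : Subgroup (Equiv.Perm (Vtx X))) : Prop :=
  K ≤ G ∧ ∀ v : Vtx X, ∀ g ∈ K, vtr v g ∈ K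

/-- The product `X^n * K` of the translates `v*K` over all vertices of level `n`. -/
def levelProd (K : Subgroup (Equiv.Perm (Vtx X))) (n : ℕ) :
    Subgroup (Equiv.Perm (Vtx X)) :=
  Subgroup.closure {p | ∃ v : Vtx X, v.length = n ∧ ∃ g ∈ K, p = vtr v g}

/-- The group `G⋉v` of states at `v` of the rigid stabilizer:
those `g ∈ G` with `v*g ∈ G`. -/
def pristSub (G : Subgroup (Equiv.Perm (Vtx X))) (v : Vtx X) :
    Subgroup (Equiv.Perm (Vtx X)) :=
  G ⊓ G.comap (vtrHom v)

/-- `G_#`, the intersection of all `G⋉v` (the maximal branching subgroup when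
`G` is regular branch). -/
def Gsharp (G : Subgroup (Equiv.Perm (Vtx X))) : Subgroup (Equiv.Perm (Vtx X)) :=
  ⨅ v : Vtx X, pristSub G v

/-- `G` is self-similar: all states of elements of `G` are (induced by) elements of `G`. -/
def SelfSimilar (G : Subgroup (Equiv.Perm (Vtx X))) : Prop :=
  ∀ g ∈ G, ∀ w : Vtx X, ∃ h ∈ G, ∀ t : Vtx X, h t = stateFun g w t

/-- `G` is level-transitive: transitive on each level of the tree. -/
def LevelTransitive (G : Subgroup (Equiv.Perm (Vtx X))) : Prop :=
  ∀ v w : Vtx X, v.length = w.length → ∃ g ∈ G, g v = w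

/-- `G` is recurrent: the state at `v` of the stabilizer of `v` is all of `G`. -/
def Recurrent (G : Subgroup (Equiv.Perm (Vtx X))) : Prop :=
  ∀ v : Vtx X, ∀ h : Equiv.Perm (Vtx X),
    (h ∈ G ↔ ∃ g ∈ G, g v = v ∧ ∀ t : Vtx X, h t = stateFun g v t)

/-- `G` is a regular branch group (for this action): it has a non-trivial
branching subgroup `K` with all products `X^n*K` of finite index in `G`. -/
def RegularBranch (G : Subgroup (Equiv.Perm (Vtx X))) : Prop :=
  ∃ K : Subgroup (Equiv.Perm (Vtx X)), IsBranching G K ∧ K ≠ ⊥ ∧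
    ∀ n : ℕ, ((levelProd K n).subgroupOf G).FiniteIndex

/-- The subgroup generated by `e`-th powers of elements of `H`. -/
def powSubgroup {P : Type*} [Group P] (H : Subgroup P) (e : ℕ) : Subgroup P :=
  Subgroup.closure {x | ∃ h ∈ H, x = h ^ e}

/-- The normal closure of `g` in the subgroup `Γ`. -/
def nclosure {P : Type*} [Group P] (Γ : Subgroup P) (g : P) : Subgroup P :=
  Subgroup.closure {x | ∃ h ∈ Γ, x = h * g * h⁻¹}

/-- `g` is finite-state: it has only finitely many states. -/
def FiniteState (g : Equiv.Perm (Vtx X)) : Prop :=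
  {f : Vtx X → Vtx X | ∃ w : Vtx X, f = stateFun g w}.Finite

/-- `g` fixes the boundary ray `y`, i.e. it fixes each of its finite prefixes. -/
def fixesRay (g : Equiv.Perm (Vtx X)) (y : ℕ → X) : Prop :=
  ∀ n : ℕ, g ((List.range n).map y) = (List.range n).map y

end Tree

/-- A group satisfies a (non-trivial) group law. -/
def SatisfiesLaw (G : Type*) [Group G] : Prop :=
  ∃ w : FreeGroup ℕ, w ≠ 1 ∧ ∀ φ : FreeGroup ℕ →* G, φ w = 1

/-!
Replace `N` by a finite-index subgroup `M ≤ N` normalized by `Γ`.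

If every vertex of some level `n` is moved by an element of `M`, then
`⁅rist(n), rist(n)⁆ ≤ M`: for `a, b ∈ rist(v)` and `g ∈ M` with `g v ≠ v`, the conjugate
`g a⁻¹ g⁻¹` lives on the subtree at `g v`, disjoint from that at `v`, so
`⁅a, b⁆ = ⁅⁅g, a⁻¹⁆, b⁆ ∈ M`; rigid stabilizers of distinct vertices of one level commute.

Otherwise each level contains a vertex `u k` fixed by `M`. The stabilizer `H` of all of them
has finite index in `Γ`, so it is finitely generated, and as the generators are finite-state,
two levels `n < m` give the same sections of every generator, hence of every element of `H`,
at `u n` and `u m`. Since `rist(u m)` is infinite and `M` has finite index, `M` contains some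
`r ≠ 1` supported below `u m`. A shortest vertex `u m ++ t` moved by `r` would give the
shorter moved vertex `u n ++ t`, a contradiction.
-/

open Subgroup
open scoped commutatorElement

section TreeAut

variable {X : Type*}

lemma isTreeAut_one : IsTreeAut (1 : Equiv.Perm (Vtx X)) :=
  ⟨rfl, fun _ x => ⟨x, rfl⟩⟩

namespace IsTreeAut

variable {f g : Equiv.Perm (Vtx X)}

lemma length_apply (hf : IsTreeAut f) (w : Vtx X) : (f w).length = w.length := by
  induction w using List.reverseRecOn with
  | nil => simp [hf.1]
  | append_singleton w x ih =>
    obtain ⟨y, hy⟩ := hf.2 w x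
    simp [hy, ih]

lemma prefix_apply_append (hf : IsTreeAut f) (w t : Vtx X) : f w <+: f (w ++ t) := by
  induction t using List.reverseRecOn with
  | nil => simp
  | append_singleton t x ih =>
    obtain ⟨y, hy⟩ := hf.2 (w ++ t) x
    rw [← List.append_assoc, hy]
    exact ih.trans (List.prefix_append _ _)

lemma apply_append (hf : IsTreeAut f) (w t : Vtx X) :
    f (w ++ t) = f w ++ stateFun f w t := by
  obtain ⟨s, hs⟩ := hf.prefix_apply_append w t
  rw [stateFun, ← hs, ← hf.length_apply w, List.drop_left]

lemma mul (hf : IsTreeAut f) (hg : IsTreeAut g) : IsTreeAut (f * g) := by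
  refine ⟨by simp [hg.1, hf.1], fun w x => ?_⟩
  obtain ⟨y, hy⟩ := hg.2 w x
  obtain ⟨z, hz⟩ := hf.2 (g w) y
  exact ⟨z, by simp [hy, hz]⟩

lemma inv (hf : IsTreeAut f) : IsTreeAut f⁻¹ := by
  refine ⟨by rw [Equiv.Perm.inv_eq_iff_eq, hf.1], fun w x => ?_⟩
  have hfu : f (f⁻¹ (w ++ [x])) = w ++ [x] := f.apply_symm_apply _
  rcases List.eq_nil_or_concat (f⁻¹ (w ++ [x])) with hu | ⟨u, z, hu⟩
  · simp [hu, hf.1] at hfu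
  · obtain ⟨y, hy⟩ := hf.2 u z
    rw [hu, List.concat_eq_append, hy] at hfu
    obtain ⟨rfl, -⟩ := List.append_inj' hfu rfl
    exact ⟨z, by simp [hu]⟩

end IsTreeAut

variable {f g : Equiv.Perm (Vtx X)}

lemma stateFun_one (v : Vtx X) : stateFun (1 : Equiv.Perm (Vtx X)) v = id :=
  funext fun _ => List.drop_left

lemma stateFun_mul (hf : IsTreeAut f) (hg : IsTreeAut g) (v : Vtx X) :
    stateFun (f * g) v = stateFun f (g v) ∘ stateFun g v := by
  funext t
  rw [stateFun, Equiv.Perm.mul_apply, hg.apply_append, hf.apply_append, ← hg.length_apply v,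
    ← hf.length_apply (g v), List.drop_left, Function.comp_apply]

lemma stateFun_inv (hf : IsTreeAut f) (v : Vtx X) :
    stateFun f⁻¹ (f v) = Function.invFun (stateFun f v) := by
  have hleft : stateFun f⁻¹ (f v) ∘ stateFun f v = id := by
    rw [← stateFun_mul hf.inv hf, inv_mul_cancel, stateFun_one]
  have hright : stateFun f v ∘ stateFun f⁻¹ (f v) = id := by
    have h := stateFun_mul hf hf.inv (f v)
    rwa [mul_inv_cancel, stateFun_one, show f⁻¹ (f v) = v from f.symm_apply_apply v,
      eq_comm] at h
  have hinj : Function.Injective (stateFun f v) :=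
    Function.LeftInverse.injective (g := stateFun f⁻¹ (f v)) (congrFun hleft)
  exact ((Function.leftInverse_invFun hinj).eq_rightInverse (congrFun hright)).symm

lemma finiteState_one : FiniteState (1 : Equiv.Perm (Vtx X)) :=
  (Set.finite_singleton id).subset <| by
    rintro _ ⟨w, rfl⟩
    exact stateFun_one w

lemma FiniteState.mul (hf : IsTreeAut f) (hg : IsTreeAut g) (hfs : FiniteState f)
    (hgs : FiniteState g) : FiniteState (f * g) :=
  ((hfs.prod hgs).image fun p => p.1 ∘ p.2).subset <| by
    rintro _ ⟨w, rfl⟩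
    exact ⟨(stateFun f (g w), stateFun g w), ⟨⟨g w, rfl⟩, ⟨w, rfl⟩⟩,
      (stateFun_mul hf hg w).symm⟩

lemma FiniteState.inv (hf : IsTreeAut f) (hfs : FiniteState f) : FiniteState f⁻¹ :=
  (hfs.image Function.invFun).subset <| by
    rintro _ ⟨w, rfl⟩
    refine ⟨_, ⟨f⁻¹ w, rfl⟩, ?_⟩
    rw [← stateFun_inv hf, show f (f⁻¹ w) = w from f.apply_symm_apply w]

variable (X) in
def finiteStateAut : Subgroup (Equiv.Perm (Vtx X)) where
  carrier := {g | IsTreeAut g ∧ FiniteState g}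
  one_mem' := ⟨isTreeAut_one, finiteState_one⟩
  mul_mem' ha hb := ⟨ha.1.mul hb.1, .mul ha.1 hb.1 ha.2 hb.2⟩
  inv_mem' ha := ⟨ha.1.inv, .inv ha.1 ha.2⟩

end TreeAut

section RigidStabilizers

variable {X : Type*} {a b g r : Equiv.Perm (Vtx X)} {u u' v : Vtx X}

lemma disjoint_of_mem_rist (hlen : u.length = u'.length) (hne : u ≠ u') (ha : a ∈ rist u)
    (hb : b ∈ rist u') : a.Disjoint b := by
  intro w
  by_cases hu : u <+: w
  · refine .inr (hb w fun hu' => hne ?_)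
    rw [List.prefix_iff_eq_take.1 hu, List.prefix_iff_eq_take.1 hu', hlen]
  · exact .inl (ha w hu)

lemma conj_mem_rist (hg : IsTreeAut g) (ha : a ∈ rist v) : g * a * g⁻¹ ∈ rist (g v) := by
  intro w hw
  have hv : ¬ v <+: g⁻¹ w := by
    rintro ⟨t, ht⟩
    exact hw ⟨stateFun g v t, by rw [← hg.apply_append, ht]; exact g.apply_symm_apply w⟩
  show g (a (g⁻¹ w)) = w
  rw [ha _ hv]
  exact g.apply_symm_apply w

lemma eq_one_of_stateFun_eq (hr : IsTreeAut r) (hrist : r ∈ rist u') (hu : r u = u)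
    (hu' : r u' = u') (hstate : stateFun r u = stateFun r u') (hlt : u.length < u'.length) :
    r = 1 := by
  ext1 w
  induction hw : w.length using Nat.strong_induction_on generalizing w with
  | _ L ih =>
    by_cases hpre : u' <+: w
    · obtain ⟨t, rfl⟩ := hpre
      have hshort : r (u ++ t) = u ++ t := ih _ (by simp [← hw]; omega) _ rfl
      rw [hr.apply_append, hu, List.append_cancel_left_eq] at hshort
      rw [hr.apply_append, hu', ← hstate, hshort, Equiv.Perm.one_apply]
    · exact hrist w hpre

lemma nonempty_of_ristG_ne_bot {Γ : Subgroup (Equiv.Perm (Vtx X))} (h : ristG Γ v ≠ ⊥) :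
    Nonempty X := by
  contrapose! h
  exact eq_bot_of_subsingleton _

lemma ristG_infinite [Nonempty X] {Γ : Subgroup (Equiv.Perm (Vtx X))}
    (hwb : ∀ v : Vtx X, ristG Γ v ≠ ⊥) (v : Vtx X) :
    (ristG Γ v : Set (Equiv.Perm (Vtx X))).Infinite := by
  intro hfin
  obtain ⟨x⟩ := ‹Nonempty X›
  have hdeep : ∀ g ∈ (ristG Γ v : Set (Equiv.Perm (Vtx X))),
      ∀ᶠ k in Filter.atTop, g ∈ rist (v ++ List.replicate k x) → g = 1 := by
    intro g _
    by_cases hg : g = 1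
    · exact .of_forall fun _ _ => hg
    obtain ⟨w, hw⟩ : ∃ w, g w ≠ w := by
      contrapose! hg
      exact Equiv.ext hg
    filter_upwards [Filter.eventually_gt_atTop w.length] with k hk hgk
    refine absurd (hgk w fun hpre => ?_) hw
    have := hpre.length_le
    simp only [List.length_append, List.length_replicate] at this
    omega
  obtain ⟨k, hk⟩ := (hfin.eventually_all.2 hdeep).exists
  refine hwb (v ++ List.replicate k x) (eq_bot_iff_forall _ |>.2 fun g hg => hk g ?_ hg.1)
  exact ⟨fun w hw => hg.1 w fun hpre => hw ((List.prefix_append _ _).trans hpre), hg.2⟩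

end RigidStabilizers

section GroupTheory

variable {G : Type*} [Group G]

lemma exists_normalized_finiteIndex_le {Γ N : Subgroup G} [(N.subgroupOf Γ).FiniteIndex] :
    ∃ M ≤ N, M ≤ Γ ∧ Γ ≤ normalizer (M : Set G) ∧ (M.subgroupOf Γ).FiniteIndex := by
  set M₀ := (N.subgroupOf Γ).normalCore
  refine ⟨M₀.map Γ.subtype, ?_, map_subtype_le M₀, ?_, ?_⟩
  · rintro _ ⟨g, hg, rfl⟩
    exact (N.subgroupOf Γ).normalCore_le hg
  · rw [le_normalizer_iff]
    rintro γ hγ _ ⟨g, hg, rfl⟩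
    exact ⟨⟨γ, hγ⟩ * g * ⟨γ, hγ⟩⁻¹, (normalCore_normal _).conj_mem g hg _, rfl⟩
  · rw [subgroupOf, comap_map_eq_self_of_injective Γ.subtype_injective]
    infer_instance

lemma exists_ne_one_mem_inf_of_infinite {Γ K M : Subgroup G} [(M.subgroupOf Γ).FiniteIndex]
    (hKΓ : K ≤ Γ) (hK : (K : Set G).Infinite) : ∃ g ∈ K ⊓ M, g ≠ 1 := by
  have := hK.to_subtype
  have := finite_quotient_of_finiteIndex (H := M.subgroupOf Γ)
  obtain ⟨a, b, hab, hq⟩ := Finite.exists_ne_map_eq_of_infinite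
    fun k : K => ((⟨k, hKΓ k.2⟩ : Γ) : Γ ⧸ M.subgroupOf Γ)
  have hM : (a : G)⁻¹ * b ∈ M := mem_subgroupOf.1 (QuotientGroup.eq.1 hq)
  refine ⟨(a : G)⁻¹ * b, ⟨K.mul_mem (K.inv_mem a.2) b.2, hM⟩, ?_⟩
  rw [Ne, inv_mul_eq_one]
  exact Subtype.coe_injective.ne hab

lemma fg_of_finiteIndex_subgroupOf {Γ H : Subgroup G} [Group.FG Γ]
    [(H.subgroupOf Γ).FiniteIndex] (hHΓ : H ≤ Γ) : H.FG := by
  have := (H.subgroupOf Γ).fg_of_index_ne_zero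
  rw [← Group.fg_iff_subgroup_fg]
  exact Group.fg_of_surjective (f := (subgroupOfEquivOfLe hHΓ).toMonoidHom) (MulEquiv.surjective _)

lemma commutatorElement_mul_left_of_commute {a b c : G} (hca : Commute c a) (hcb : Commute c b) :
    ⁅c * a, b⁆ = ⁅a, b⁆ := by
  have hc : Commute c (a * b * a⁻¹) := (hca.mul_right hcb).mul_right hca.inv_right
  calc ⁅c * a, b⁆ = c * (a * b * a⁻¹) * c⁻¹ * b⁻¹ := by group
    _ = ⁅a, b⁆ := by rw [hc.eq]; group

lemma commutator_iSup_le {ι : Sort*} {A : ι → Subgroup G} {K M Γ : Subgroup G}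
    (hA : ∀ i, A i ≤ Γ) (hM : Γ ≤ normalizer (M : Set G)) (h : ∀ i, ⁅A i, K⁆ ≤ M) :
    ⁅⨆ i, A i, K⁆ ≤ M := by
  rw [commutator_le]
  intro x hx y hy
  induction hx using iSup_induction' with
  | hp i x hx => exact h i (commutator_mem_commutator hx hy)
  | h1 => simp
  | hmul a b ha _ iha ihb =>
    rw [show ⁅a * b, y⁆ = a * ⁅b, y⁆ * a⁻¹ * ⁅a, y⁆ by group]
    exact mul_mem (le_normalizer_iff.1 hM a (iSup_le hA ha) _ ihb) iha

end GroupTheory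

section BranchGroups

variable {X : Type*} {Γ M : Subgroup (Equiv.Perm (Vtx X))}

lemma commutator_mem_of_apply_ne (hMnorm : Γ ≤ normalizer (M : Set _))
    {g a b : Equiv.Perm (Vtx X)} {u : Vtx X} (hg : IsTreeAut g) (hgM : g ∈ M) (hgu : g u ≠ u)
    (ha : a ∈ ristG Γ u) (hb : b ∈ ristG Γ u) : ⁅a, b⁆ ∈ M := by
  have hc : g * a⁻¹ * g⁻¹ ∈ rist (g u) := conj_mem_rist hg (inv_mem ha.1)
  have hcomm {d} (hd : d ∈ rist u) : Commute (g * a⁻¹ * g⁻¹) d :=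
    (disjoint_of_mem_rist (hg.length_apply u) hgu hc hd).commute
  have hM := le_normalizer_iff_commutator_le_left.1 hMnorm
  have key : ⁅⁅g, a⁻¹⁆, b⁆ = ⁅a, b⁆ := by
    rw [commutatorElement_def g, inv_inv]
    exact commutatorElement_mul_left_of_commute (hcomm ha.1) (hcomm hb.1)
  rw [← key]
  exact hM (commutator_mem_commutator (hM (commutator_mem_commutator hgM (inv_mem ha.2))) hb.2)

lemma commutator_ristLevel_le (hMnorm : Γ ≤ normalizer (M : Set _))
    (hM : ∀ g ∈ M, IsTreeAut g) {n : ℕ} (hn : ∀ v : Vtx X, v.length = n → ∃ g ∈ M, g v ≠ v) :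
    ⁅ristLevel Γ n, ristLevel Γ n⁆ ≤ M := by
  have hpair (v w : {v : Vtx X // v.length = n}) : ⁅ristG Γ v, ristG Γ w⁆ ≤ M := by
    rw [commutator_le]
    intro a ha b hb
    by_cases hvw : v = w
    · obtain ⟨g, hgM, hgv⟩ := hn v v.2
      exact commutator_mem_of_apply_ne hMnorm (hM g hgM) hgM hgv ha (hvw ▸ hb)
    · have hdisj := disjoint_of_mem_rist (v.2.trans w.2.symm) (Subtype.coe_injective.ne hvw)
        ha.1 hb.1
      rw [hdisj.commute.commutator_eq]
      exact one_mem M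
  rw [ristLevel, iSup_subtype']
  refine commutator_iSup_le (fun _ => inf_le_right) hMnorm fun v => ?_
  rw [commutator_comm]
  exact commutator_iSup_le (fun _ => inf_le_right) hMnorm fun w => hpair w v

lemma exists_lt_stateFun_eq {T : Set (Equiv.Perm (Vtx X))} (hTfin : T.Finite)
    (hT : ∀ t ∈ T, FiniteState t) (u : ℕ → Vtx X) :
    ∃ n m, n < m ∧ ∀ t ∈ T, stateFun t (u n) = stateFun t (u m) := by
  have := hTfin.to_subtype
  obtain ⟨n, m, hnm, h⟩ := (Set.Finite.pi fun t : T => hT t t.2).exists_lt_map_eq_of_forall_mem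
    (f := fun k (t : T) => stateFun t (u k))
    fun k => Set.mem_univ_pi.2 fun _ => by exact ⟨u k, rfl⟩
  exact ⟨n, m, hnm, fun t ht => congrFun h ⟨t, ht⟩⟩

lemma stateFun_eq_of_mem_closure {T : Set (Equiv.Perm (Vtx X))} {u u' : Vtx X}
    (hT : ∀ g ∈ Subgroup.closure T, IsTreeAut g ∧ g u = u ∧ g u' = u')
    (h : ∀ t ∈ T, stateFun t u = stateFun t u') {g : Equiv.Perm (Vtx X)}
    (hg : g ∈ Subgroup.closure T) :
    stateFun g u = stateFun g u' := by
  induction hg using closure_induction with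
  | mem t ht => exact h t ht
  | one => rw [stateFun_one, stateFun_one]
  | mul a b ha hb iha ihb =>
    obtain ⟨hat, -⟩ := hT a ha
    obtain ⟨hbt, hbu, hbu'⟩ := hT b hb
    rw [stateFun_mul hat hbt, stateFun_mul hat hbt, hbu, hbu', iha, ihb]
  | inv a ha ih =>
    obtain ⟨hat, hau, hau'⟩ := hT a ha
    calc stateFun a⁻¹ u = stateFun a⁻¹ (a u) := by rw [hau]
      _ = stateFun a⁻¹ (a u') := by rw [stateFun_inv hat, stateFun_inv hat, ih]
      _ = stateFun a⁻¹ u' := by rw [hau']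

lemma exists_level_forall_apply_ne [Group.FG Γ] (hΓ : Γ ≤ finiteStateAut X) (hMΓ : M ≤ Γ)
    [(M.subgroupOf Γ).FiniteIndex] (hM : ∀ v, ∃ r ∈ ristG Γ v ⊓ M, r ≠ 1) :
    ∃ n, ∀ v : Vtx X, v.length = n → ∃ g ∈ M, g v ≠ v := by
  by_contra! hfix
  choose u hu_len hu_fix using hfix
  set H := Γ ⊓ fixingSubgroup (Equiv.Perm (Vtx X)) (Set.range u)
  have hHfix : ∀ g ∈ H, ∀ k, g (u k) = u k := fun g hg k => hg.2 ⟨u k, k, rfl⟩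
  have hMH : M ≤ H := fun g hg => ⟨hMΓ hg, by rintro ⟨_, k, rfl⟩; exact hu_fix k g hg⟩
  have : (H.subgroupOf Γ).FiniteIndex := finiteIndex_of_le (subgroupOf_mono Γ hMH)
  obtain ⟨T, hT⟩ : H.FG := fg_of_finiteIndex_subgroupOf inf_le_left
  have hTΓ : ∀ g ∈ Subgroup.closure (T : Set _), g ∈ finiteStateAut X :=
    fun g hg => hΓ (hT ▸ hg).1
  obtain ⟨n, m, hnm, hstate⟩ :=
    exists_lt_stateFun_eq T.finite_toSet (fun t ht => (hTΓ t (subset_closure ht)).2) u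
  have hH : ∀ g ∈ H, stateFun g (u n) = stateFun g (u m) := by
    rw [← hT]
    exact fun g => stateFun_eq_of_mem_closure
      (fun g hg => ⟨(hTΓ g hg).1, hHfix g (hT ▸ hg) n, hHfix g (hT ▸ hg) m⟩) hstate
  obtain ⟨r, ⟨hr_rist, hrM⟩, hr1⟩ := hM (u m)
  exact hr1 (eq_one_of_stateFun_eq (hΓ hr_rist.2).1 hr_rist.1 (hu_fix n r hrM) (hu_fix m r hrM)
    (hH r (hMH hrM)) (by rwa [hu_len, hu_len]))

end BranchGroups

theorem finite_index_contains_rist_commutator_general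
    {X : Type*}
    (Γ : Subgroup (Equiv.Perm (Vtx X)))
    (S : Set (Equiv.Perm (Vtx X))) (hSfin : S.Finite)
    (hSst : ∀ s ∈ S, IsTreeAut s ∧ FiniteState s)
    (hgen : Γ = Subgroup.closure S)
    (hwb : ∀ v : Vtx X, ristG Γ v ≠ ⊥)
    (N : Subgroup (Equiv.Perm (Vtx X)))
    (hNfin : (N.subgroupOf Γ).FiniteIndex) :
    ∃ n : ℕ, ⁅ristLevel Γ n, ristLevel Γ n⁆ ≤ N := by
  have hΓ : Γ ≤ finiteStateAut X := hgen ▸ (closure_le _).2 hSst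
  have : Group.FG Γ := by
    subst hgen
    have := hSfin.to_subtype
    exact Group.closure_finite_fg S
  have : Nonempty X := nonempty_of_ristG_ne_bot (hwb [])
  obtain ⟨M, hMN, hMΓ, hMnorm, hMfin⟩ := exists_normalized_finiteIndex_le (Γ := Γ) (N := N)
  obtain ⟨n, hn⟩ := exists_level_forall_apply_ne hΓ hMΓ fun v =>
    exists_ne_one_mem_inf_of_infinite inf_le_right (ristG_infinite hwb v)
  exact ⟨n, (commutator_ristLevel_le hMnorm (fun g hg => (hΓ (hMΓ hg)).1) hn).trans hMN⟩

/-- in a weakly branch group generated by finitely many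
finite-state automorphisms, every finite-index subgroup contains the derived
subgroup of some level rigid stabilizer. -/
theorem finite_index_contains_rist_commutator
    {X : Type*} [DecidableEq X] [Fintype X]
    (Γ : Subgroup (Equiv.Perm (Vtx X)))
    (S : Set (Equiv.Perm (Vtx X))) (hSfin : S.Finite)
    (hSst : ∀ s ∈ S, IsTreeAut s ∧ FiniteState s)
    (hgen : Γ = Subgroup.closure S)
    (hwb : ∀ v : Vtx X, ristG Γ v ≠ ⊥)
    (N : Subgroup (Equiv.Perm (Vtx X))) (hNG : N ≤ Γ)
    (hNfin : (N.subgroupOf Γ).FiniteIndex) :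
    ∃ n : ℕ, ⁅ristLevel Γ n, ristLevel Γ n⁆ ≤ N :=
  finite_index_contains_rist_commutator_general Γ S hSfin hSst hgen hwb N hNfin
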